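/- arXiv:2001.11999 — 5 statements merged into one kernel-verified Lean document; each statement's English description precedes it below -/
import Mathlib

section
/- Let d, v be natural numbers with d+1 ≤ v. Let ℱ and ℱ̄ be two collections of (d+1)-element subsets of {1,…,v} and let Δ : ℱ̄ → {−1,+1}. Let M be the set of real v×(d+1) matrices X of rank d+1 such that det X_J = 0 for every J ∈ ℱ and such that there exists ε ∈ {−1,+1} with ε·Δ_J·det X_J > 0 for every J ∈ ℱ̄, and let G be the set of (d+1)-dimensional subspaces Λ ⊆ ℝ^v admitting a basis matrix X with det X_J = 0 for all J ∈ ℱ and Δ_J·det X_J > 0 for all J ∈ ℱ̄. Call two real v×d matrices Q, Q′ affinely equivalent if there exist A ∈ GL_d(ℝ) and b ∈ ℝ^d such that every row of Q′ is obtained from the corresponding row of Q by q ↦ A·q + b. Then the map Q ↦ col([𝟙 | Q]) (the column space of the v×(d+1) matrix whose first column is the all-ones vector 𝟙 and whose remaining columns are those of Q) induces a bijection between the affine-equivalence classes of matrices Q ∈ ℝ^{v×d} with [𝟙 | Q] ∈ M and the set of subspaces Λ ∈ G containing the all-ones vector 𝟙. -/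
/-!
Right multiplication by an invertible `B` preserves the column space and the rank and scales
every maximal minor by `det B`; this lets the sign `ε` be absorbed into, or extracted from,
a change of basis. If `𝟙 = X c` lies in the column space of a basis matrix `X`, completing `c`
to an invertible `B` with first column `c` makes `X B = [𝟙 | Q]`. Conversely, if two full-rank
matrices `[𝟙 | Q]`, `[𝟙 | Q']` span the same space then `[𝟙 | Q'] = [𝟙 | Q] C` with `C`
invertible; comparing first columns, injectivity forces `C e₀ = e₀`, so `C` is the block
matrix `[[1, bᵀ], [0, Aᵀ]]` of an affine map `q ↦ A q + b`.
-/

open Matrix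

/-- The maximal minor (Plücker coordinate) of a `v × k` matrix given by the rows
indexed by a `k`-element subset `J`, taken in increasing order. -/
noncomputable def plk {v k : ℕ} (X : Matrix (Fin v) (Fin k) ℝ) (J : Finset (Fin v)) : ℝ :=
  if h : J.card = k then (X.submatrix (fun i => ((J.orderIsoOfFin h) i : Fin v)) id).det else 0

/-- The column space of a matrix. -/
noncomputable def colSpace {v k : ℕ} (X : Matrix (Fin v) (Fin k) ℝ) :
    Submodule ℝ (Fin v → ℝ) :=
  LinearMap.range X.mulVecLin

/-- The matrix `[𝟙 | Q]`: first column all ones, remaining columns those of `Q`. -/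
def aug {v d : ℕ} (Q : Matrix (Fin v) (Fin d) ℝ) : Matrix (Fin v) (Fin (d + 1)) ℝ :=
  Matrix.of fun i j => Fin.cases (1 : ℝ) (fun k => Q i k) j

/-- Two `v × d` matrices are affinely equivalent if their rows are related by a fixed
invertible affine transformation `q ↦ A q + b`. -/
def affEquiv {v d : ℕ} (Q Q' : Matrix (Fin v) (Fin d) ℝ) : Prop :=
  ∃ A : Matrix (Fin d) (Fin d) ℝ, IsUnit A.det ∧
    ∃ b : Fin d → ℝ, ∀ i, Q' i = A.mulVec (Q i) + b

lemma plk_mul {v k : ℕ} (X : Matrix (Fin v) (Fin k) ℝ) (B : Matrix (Fin k) (Fin k) ℝ)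
    (J : Finset (Fin v)) : plk (X * B) J = plk X J * B.det := by
  unfold plk
  split
  · rw [← det_mul, submatrix_mul _ _ _ id _ Function.bijective_id, submatrix_id_id]
  · rw [zero_mul]

lemma colSpace_mul_of_isUnit_det {v k : ℕ} (X : Matrix (Fin v) (Fin k) ℝ)
    {B : Matrix (Fin k) (Fin k) ℝ} (hB : IsUnit B.det) : colSpace (X * B) = colSpace X := by
  rw [colSpace, colSpace, mulVecLin_mul]
  exact LinearMap.range_comp_of_range_eq_top _ <| LinearMap.range_eq_top.2 <|
    (mulVec_surjective_iff_isUnit.2 ((isUnit_iff_isUnit_det B).2 hB))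

lemma Matrix.mulVec_injective_of_rank_eq {K m n : Type*} [Field K] [Fintype n]
    {A : Matrix m n K} (h : A.rank = Fintype.card n) : Function.Injective A.mulVec :=
  mulVec_injective_iff.2 <| linearIndependent_iff_card_eq_finrank_span.2 <| by
    rw [Set.finrank, ← rank_eq_finrank_span_cols, h]

lemma Matrix.isUnit_of_rank_mul_eq {K m n : Type*} [Field K] [Fintype n] [DecidableEq n]
    {A : Matrix m n K} {C : Matrix n n K} (h : (A * C).rank = Fintype.card n) : IsUnit C :=
  mulVec_injective_iff_isUnit.1 <| mulVec_injective_of_rank_eq <|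
    le_antisymm C.rank_le_card_width (h ▸ rank_mul_le_right A C)

lemma exists_eq_mul_of_colSpace_le {v k l : ℕ} {X : Matrix (Fin v) (Fin k) ℝ}
    {Y : Matrix (Fin v) (Fin l) ℝ} (h : colSpace Y ≤ colSpace X) :
    ∃ C : Matrix (Fin k) (Fin l) ℝ, Y = X * C := by
  have hcol (j : Fin l) : Y.col j ∈ colSpace X := h ⟨Pi.single j 1, mulVec_single_one Y j⟩
  choose c hc using hcol
  refine ⟨(of c).transpose, ext_col fun j => ?_⟩
  rw [← hc j]
  ext i
  simp [mul_apply, mulVec, dotProduct]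

lemma exists_isUnit_det_col_zero_eq {k : ℕ} {c : Fin (k + 1) → ℝ} (hc : c ≠ 0) :
    ∃ B : Matrix (Fin (k + 1)) (Fin (k + 1)) ℝ, IsUnit B.det ∧ B.col 0 = c := by
  obtain ⟨j, hj⟩ := Function.ne_iff.1 hc
  refine ⟨(updateCol 1 j c).submatrix id (Equiv.swap 0 j), ?_, ?_⟩
  · rw [det_permute', ← cramer_apply, cramer_one, isUnit_iff_ne_zero]
    exact mul_ne_zero (by simp [Units.ne_zero]) hj
  · ext i
    simp

lemma exists_sign_mul_pos {a : ℝ} (ha : a ≠ 0) : ∃ ε : ℝ, (ε = 1 ∨ ε = -1) ∧ 0 < ε * a := by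
  rcases ha.lt_or_gt with h | h
  · exact ⟨-1, Or.inr rfl, by linarith⟩
  · exact ⟨1, Or.inl rfl, by linarith⟩

lemma exists_det_eq {k : ℕ} (a : ℝ) : ∃ B : Matrix (Fin (k + 1)) (Fin (k + 1)) ℝ, B.det = a :=
  ⟨diagonal (Function.update 1 0 a), by simp [Fin.prod_univ_succ]⟩

section Affine

variable {v d : ℕ}

/-- The block matrix `[[1, bᵀ], [0, Aᵀ]]`: right multiplication of `[𝟙 | Q]` by it applies
`q ↦ A q + b` to every row of `Q`. -/
def affineMatrix (A : Matrix (Fin d) (Fin d) ℝ) (b : Fin d → ℝ) :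
    Matrix (Fin (d + 1)) (Fin (d + 1)) ℝ :=
  of (Fin.cons (Fin.cons 1 b) fun k => Fin.cons 0 (Aᵀ k))

lemma det_affineMatrix (A : Matrix (Fin d) (Fin d) ℝ) (b : Fin d → ℝ) :
    (affineMatrix A b).det = A.det := by
  rw [det_succ_column_zero, Fin.sum_univ_succ, Finset.sum_eq_zero fun i _ => by
    simp [affineMatrix]]
  have hA : (affineMatrix A b).submatrix Fin.succ Fin.succ = Aᵀ := by
    ext; simp [affineMatrix]
  rw [Fin.succAbove_zero, hA, det_transpose]
  simp [affineMatrix]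

lemma affineMatrix_eq_of_col_zero {C : Matrix (Fin (d + 1)) (Fin (d + 1)) ℝ}
    (hC : C.col 0 = Pi.single 0 1) :
    affineMatrix (C.submatrix Fin.succ Fin.succ)ᵀ (fun l => C 0 l.succ) = C := by
  have hC' (i : Fin (d + 1)) : C i 0 = (Pi.single 0 1 : Fin (d + 1) → ℝ) i := congr_fun hC i
  ext i j
  cases i using Fin.cases <;> cases j using Fin.cases <;>
    simp [affineMatrix, hC', Fin.succ_ne_zero]

lemma aug_injective : Function.Injective (aug : Matrix (Fin v) (Fin d) ℝ → _) :=
  fun _ _ h => funext₂ fun i k => congr_fun₂ h i k.succ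

lemma col_zero_aug (Q : Matrix (Fin v) (Fin d) ℝ) : (aug Q).col 0 = 1 := rfl

lemma aug_submatrix_succ {Y : Matrix (Fin v) (Fin (d + 1)) ℝ} (hY : Y.col 0 = 1) :
    aug (Y.submatrix id Fin.succ) = Y := by
  ext i j
  cases j using Fin.cases
  · exact (congr_fun hY i).symm
  · rfl

lemma aug_mul_affineMatrix (Q : Matrix (Fin v) (Fin d) ℝ) (A : Matrix (Fin d) (Fin d) ℝ)
    (b : Fin d → ℝ) : aug Q * affineMatrix A b = aug (of fun i => A *ᵥ Q i + b) := by
  ext i j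
  cases j using Fin.cases <;>
    simp [aug, affineMatrix, mul_apply, Fin.sum_univ_succ, mulVec, dotProduct, mul_comm, add_comm]

end Affine

lemma one_mem_colSpace_aug {v d : ℕ} (Q : Matrix (Fin v) (Fin d) ℝ) :
    (1 : Fin v → ℝ) ∈ colSpace (aug Q) :=
  ⟨Pi.single 0 1, (mulVec_single_one _ _).trans (col_zero_aug Q)⟩

lemma exists_aug_eq_mul_of_one_mem_colSpace {v d : ℕ} (hv : v ≠ 0)
    {X : Matrix (Fin v) (Fin (d + 1)) ℝ} (h1 : (1 : Fin v → ℝ) ∈ colSpace X) :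
    ∃ (Q : Matrix (Fin v) (Fin d) ℝ) (B : Matrix (Fin (d + 1)) (Fin (d + 1)) ℝ),
      IsUnit B.det ∧ aug Q = X * B := by
  obtain ⟨c, hc⟩ := h1
  have hc0 : c ≠ 0 := by
    rintro rfl
    exact zero_ne_one (congr_fun ((map_zero _).symm.trans hc) ⟨0, Nat.pos_of_ne_zero hv⟩)
  obtain ⟨B, hBu, hBc⟩ := exists_isUnit_det_col_zero_eq hc0
  refine ⟨(X * B).submatrix id Fin.succ, B, hBu, aug_submatrix_succ ?_⟩
  rw [← mulVec_single_one, ← mulVec_mulVec, mulVec_single_one, hBc]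
  exact hc

lemma colSpace_aug_eq_iff_affEquiv {v d : ℕ} {Q Q' : Matrix (Fin v) (Fin d) ℝ}
    (hQ : (aug Q).rank = d + 1) : colSpace (aug Q) = colSpace (aug Q') ↔ affEquiv Q Q' := by
  constructor
  · intro h
    obtain ⟨C, hC⟩ := exists_eq_mul_of_colSpace_le h.ge
    have hrank : (aug Q * C).rank = Fintype.card (Fin (d + 1)) := by
      have hQQ' : (aug Q').rank = (aug Q).rank :=
        congrArg (fun W : Submodule ℝ (Fin v → ℝ) => Module.finrank ℝ W) h.symm
      rw [← hC, hQQ', hQ, Fintype.card_fin]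
    have hcol : C.col 0 = Pi.single 0 1 := by
      refine mulVec_injective_of_rank_eq (hQ.trans (Fintype.card_fin _).symm) ?_
      rw [← mulVec_single_one, mulVec_mulVec, ← hC, mulVec_single_one, mulVec_single_one,
        col_zero_aug, col_zero_aug]
    have hA : IsUnit (C.submatrix Fin.succ Fin.succ)ᵀ.det := by
      rw [← det_affineMatrix _ fun l => C 0 l.succ, affineMatrix_eq_of_col_zero hcol,
        ← isUnit_iff_isUnit_det]
      exact isUnit_of_rank_mul_eq hrank
    rw [← affineMatrix_eq_of_col_zero hcol, aug_mul_affineMatrix] at hC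
    exact ⟨_, hA, _, fun i => congr_fun (aug_injective hC) i⟩
  · rintro ⟨A, hA, b, hQQ'⟩
    have hQ' : aug Q' = aug Q * affineMatrix A b := by
      rw [aug_mul_affineMatrix]
      exact congrArg aug (funext hQQ')
    rw [hQ', colSpace_mul_of_isUnit_det _ ((det_affineMatrix A b).symm ▸ hA)]

theorem stmt1_general (d v : ℕ) (hdv : d + 1 ≤ v)
    (ℱ ℱbar : Set (Finset (Fin v)))
    (Δ : Finset (Fin v) → ℝ)
    (M : Set (Matrix (Fin v) (Fin (d + 1)) ℝ))
    (hM : M = {X | X.rank = d + 1 ∧ (∀ J ∈ ℱ, plk X J = 0) ∧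
      ∃ ε : ℝ, (ε = 1 ∨ ε = -1) ∧ ∀ J ∈ ℱbar, 0 < ε * (Δ J * plk X J)})
    (G : Set (Submodule ℝ (Fin v → ℝ)))
    (hG : G = {Λ : Submodule ℝ (Fin v → ℝ) | Module.finrank ℝ ↥Λ = d + 1 ∧
      ∃ X : Matrix (Fin v) (Fin (d + 1)) ℝ, colSpace X = Λ ∧ X.rank = d + 1 ∧
        (∀ J ∈ ℱ, plk X J = 0) ∧ ∀ J ∈ ℱbar, 0 < Δ J * plk X J}) :
    (∀ Q : Matrix (Fin v) (Fin d) ℝ, aug Q ∈ M →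
      colSpace (aug Q) ∈ G ∧ (1 : Fin v → ℝ) ∈ colSpace (aug Q)) ∧
    (∀ Λ ∈ G, (1 : Fin v → ℝ) ∈ Λ →
      ∃ Q : Matrix (Fin v) (Fin d) ℝ, aug Q ∈ M ∧ colSpace (aug Q) = Λ) ∧
    (∀ Q Q' : Matrix (Fin v) (Fin d) ℝ, aug Q ∈ M → aug Q' ∈ M →
      (colSpace (aug Q) = colSpace (aug Q') ↔ affEquiv Q Q')) := by
  subst hM hG
  refine ⟨?_, ?_, fun Q Q' hQ _ => colSpace_aug_eq_iff_affEquiv hQ.1⟩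
  · rintro Q ⟨hrank, hℱQ, ε, hε, hℱbarQ⟩
    obtain ⟨B, hB⟩ := exists_det_eq (k := d) ε
    have hBu : IsUnit B.det := hB ▸ (by rcases hε with rfl | rfl <;> simp)
    refine ⟨⟨hrank, aug Q * B, colSpace_mul_of_isUnit_det _ hBu,
      (rank_mul_eq_left_of_isUnit_det _ _ hBu).trans hrank,
      fun J hJ => by rw [plk_mul, hℱQ J hJ, zero_mul], fun J hJ => ?_⟩, one_mem_colSpace_aug Q⟩
    rw [plk_mul, hB]
    exact (hℱbarQ J hJ).trans_eq (by ring)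
  · rintro Λ ⟨-, X, rfl, hrank, hℱX, hℱbarX⟩ h1
    obtain ⟨Q, B, hBu, hQ⟩ := exists_aug_eq_mul_of_one_mem_colSpace (by omega) h1
    obtain ⟨ε, hε, hεB⟩ := exists_sign_mul_pos hBu.ne_zero
    refine ⟨Q, ⟨?_, fun J hJ => ?_, ε, hε, fun J hJ => ?_⟩, ?_⟩ <;> rw [hQ]
    · exact (rank_mul_eq_left_of_isUnit_det _ _ hBu).trans hrank
    · rw [plk_mul, hℱX J hJ, zero_mul]
    · rw [plk_mul]
      exact (mul_pos (hℱbarX J hJ) hεB).trans_eq (by ring)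
    · exact colSpace_mul_of_isUnit_det _ hBu

/-- Corollary (polytopeGrassequiv): `Q ↦ col [𝟙 | Q]` induces a bijection between
affine-equivalence classes of matrices `Q` with `[𝟙|Q] ∈ M` and the subspaces in `G`
containing the all-ones vector. -/
theorem stmt1 (d v : ℕ) (hdv : d + 1 ≤ v)
    (ℱ ℱbar : Set (Finset (Fin v)))
    (hℱ : ∀ J ∈ ℱ, J.card = d + 1) (hℱbar : ∀ J ∈ ℱbar, J.card = d + 1)
    (Δ : Finset (Fin v) → ℝ) (hΔ : ∀ J ∈ ℱbar, Δ J = 1 ∨ Δ J = -1)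
    (M : Set (Matrix (Fin v) (Fin (d + 1)) ℝ))
    (hM : M = {X | X.rank = d + 1 ∧ (∀ J ∈ ℱ, plk X J = 0) ∧
      ∃ ε : ℝ, (ε = 1 ∨ ε = -1) ∧ ∀ J ∈ ℱbar, 0 < ε * (Δ J * plk X J)})
    (G : Set (Submodule ℝ (Fin v → ℝ)))
    (hG : G = {Λ : Submodule ℝ (Fin v → ℝ) | Module.finrank ℝ ↥Λ = d + 1 ∧
      ∃ X : Matrix (Fin v) (Fin (d + 1)) ℝ, colSpace X = Λ ∧ X.rank = d + 1 ∧
        (∀ J ∈ ℱ, plk X J = 0) ∧ ∀ J ∈ ℱbar, 0 < Δ J * plk X J}) :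
    (∀ Q : Matrix (Fin v) (Fin d) ℝ, aug Q ∈ M →
      colSpace (aug Q) ∈ G ∧ (1 : Fin v → ℝ) ∈ colSpace (aug Q)) ∧
    (∀ Λ ∈ G, (1 : Fin v → ℝ) ∈ Λ →
      ∃ Q : Matrix (Fin v) (Fin d) ℝ, aug Q ∈ M ∧ colSpace (aug Q) = Λ) ∧
    (∀ Q Q' : Matrix (Fin v) (Fin d) ℝ, aug Q ∈ M → aug Q' ∈ M →
      (colSpace (aug Q) = colSpace (aug Q') ↔ affEquiv Q Q')) :=
  stmt1_general d v hdv ℱ ℱbar Δ M hM G hG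
end

section
/- Fix integers d ≥ 1 and v, f with d+1 < v. Let Z be a zero pattern assigning to each column index j ∈ {1,…,f} a proper subset Z(j) ⊊ {1,…,v}, and let 𝒮 be the set of real v×f matrices S of rank d+1 such that S_{ij} = 0 if and only if i ∈ Z(j). Suppose S ∈ 𝒮 satisfies the facet-rank condition: for every j, the rows of S indexed by Z(j) span a d-dimensional subspace of ℝ^f. Then for any S′ ∈ 𝒮 the following are equivalent: (i) S and S′ have the same column space; (ii) there exist nonzero real numbers λ_1,…,λ_f such that for every j the j-th column of S′ equals λ_j times the j-th column of S. -/
/-!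
Fix a column `j` and restrict the column space `W` of `S` (dimension `d + 1`) to the coordinates
in `Z j`. The image is spanned by the rows of `S` indexed by `Z j`, so it has dimension `d` and the
restriction has a one-dimensional kernel. Column `j` of `S` and, when `S'` has the same column
space, column `j` of `S'` both lie in that kernel, and the former is nonzero because
`Z j ≠ univ`; hence they are proportional, with a nonzero factor since the latter is nonzero too.
Conversely, scaling columns by nonzero factors is right multiplication by an invertible diagonal
matrix, which does not change the column space.
-/

open Matrix Module

section
variable {K V U : Type*} [Field K] [AddCommGroup V] [Module K V] [AddCommGroup U] [Module K U]

theorem Submodule.exists_eq_smul_of_finrank_map_add_one {W : Submodule K V}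
    [FiniteDimensional K W] {φ : V →ₗ[K] U} (hW : finrank K (W.map φ) + 1 = finrank K W)
    {u u' : V} (hu : u ∈ W) (hu' : u' ∈ W) (hφu : φ u = 0) (hφu' : φ u' = 0) (hu0 : u ≠ 0) :
    ∃ c : K, u' = c • u := by
  set ψ := φ ∘ₗ W.subtype
  have hker : finrank K (LinearMap.ker ψ) = 1 := by
    have hrange : LinearMap.range ψ = W.map φ := by
      rw [LinearMap.range_comp, Submodule.range_subtype]
    have := ψ.finrank_range_add_finrank_ker
    rw [hrange] at this
    omega
  have hne : (⟨⟨u, hu⟩, hφu⟩ : LinearMap.ker ψ) ≠ 0 := by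
    simpa [Subtype.ext_iff] using hu0
  obtain ⟨c, hc⟩ := (finrank_eq_one_iff_of_nonzero' _ hne).1 hker ⟨⟨u', hu'⟩, hφu'⟩
  exact ⟨c, by simpa [Subtype.ext_iff] using hc.symm⟩

end

namespace Matrix

variable {K l m n : Type*} [Field K] [Fintype n]

theorem col_mem_range_mulVecLin (A : Matrix m n K) (j : n) :
    A.col j ∈ LinearMap.range A.mulVecLin := by
  classical
  exact ⟨Pi.single j 1, A.mulVec_single_one j⟩

theorem map_funLeft_range_mulVecLin (A : Matrix m n K) (e : l → m) :
    (LinearMap.range A.mulVecLin).map (LinearMap.funLeft K K e) =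
      LinearMap.range (A.submatrix e id).mulVecLin := by
  rw [← LinearMap.range_comp]
  rfl

theorem range_mulVecLin_eq_of_col_smul {A B : Matrix m n K} {c : n → K} (hc : ∀ j, c j ≠ 0)
    (hB : ∀ i j, B i j = c j * A i j) :
    LinearMap.range A.mulVecLin = LinearMap.range B.mulVecLin := by
  classical
  have hBA : B = A * diagonal c := by
    ext i j
    rw [hB, mul_diagonal, mul_comm]
  have hsurj : LinearMap.range (diagonal c).mulVecLin = ⊤ := by
    rw [LinearMap.range_eq_top]
    intro x
    refine ⟨fun j => (c j)⁻¹ * x j, funext fun j => ?_⟩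
    simp [mulVec_diagonal, hc j]
  rw [hBA, mulVecLin_mul, LinearMap.range_comp_of_range_eq_top _ hsurj]

theorem exists_col_eq_smul_col [Fintype m] {A B : Matrix m n K}
    (hAB : LinearMap.range A.mulVecLin = LinearMap.range B.mulVecLin) (s : Set m)
    (hrank : finrank K (Submodule.span K ((fun i => A i) '' s)) + 1 = A.rank) (j : n)
    (hA : ∀ i ∈ s, A i j = 0) (hB : ∀ i ∈ s, B i j = 0) (hA0 : A.col j ≠ 0) :
    ∃ c : K, B.col j = c • A.col j := by
  refine Submodule.exists_eq_smul_of_finrank_map_add_one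
    (φ := LinearMap.funLeft K K ((↑) : s → m)) ?_
    (A.col_mem_range_mulVecLin j) (hAB ▸ B.col_mem_range_mulVecLin j)
    (funext fun i => hA i i.2) (funext fun i => hB i i.2) hA0
  change _ = A.rank
  rw [map_funLeft_range_mulVecLin, ← rank, rank_eq_finrank_span_row, ← hrank, Set.image_eq_range]
  rfl

end Matrix

theorem stmt3_general (d v f : ℕ)
    (Z : Fin f → Finset (Fin v)) (hZ : ∀ j, Z j ≠ Finset.univ)
    (𝒮 : Set (Matrix (Fin v) (Fin f) ℝ))
    (h𝒮 : 𝒮 = {S | S.rank = d + 1 ∧ ∀ i j, S i j = 0 ↔ i ∈ Z j})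
    (S : Matrix (Fin v) (Fin f) ℝ) (hS : S ∈ 𝒮)
    (hfacet : ∀ j, Module.finrank ℝ
      ↥(Submodule.span ℝ ((fun i => S i) '' (Z j : Set (Fin v)))) = d) :
    ∀ S' ∈ 𝒮, (colSpace S = colSpace S' ↔
      ∃ lam : Fin f → ℝ, (∀ j, lam j ≠ 0) ∧ ∀ i j, S' i j = lam j * S i j) := by
  subst h𝒮
  obtain ⟨hSrank, hSZ⟩ := hS
  rintro S' ⟨-, hS'Z⟩
  have hout : ∀ j, ∃ i, i ∉ Z j := fun j => by
    simpa [Finset.eq_univ_iff_forall] using hZ j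
  constructor
  · intro hcol
    have hcols : ∀ j, ∃ c : ℝ, S'.col j = c • S.col j := fun j => by
      obtain ⟨i₀, hi₀⟩ := hout j
      exact exists_col_eq_smul_col hcol (Z j) (by rw [hfacet, hSrank]) j
        (fun i hi => (hSZ i j).2 hi) (fun i hi => (hS'Z i j).2 hi)
        (fun h => hi₀ ((hSZ i₀ j).1 (congrFun h i₀)))
    choose lam hlam using hcols
    refine ⟨lam, fun j hj => ?_, fun i j => congrFun (hlam j) i⟩
    obtain ⟨i, hi⟩ := hout j
    exact hi ((hS'Z i j).1 (by simpa [hj] using congrFun (hlam j) i))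
  · rintro ⟨lam, hlam0, hlam⟩
    exact range_mulVecLin_eq_of_col_smul hlam0 hlam

/-- Theorem (slackGrassequiv, pointwise): for `S` in the "slack variety" `𝒮` satisfying the
facet-rank condition, a matrix `S'` in `𝒮` has the same column space as `S` iff `S'` is
obtained from `S` by scaling each column by a nonzero real. -/
theorem stmt3 (d v f : ℕ) (hd : 1 ≤ d) (hv : d + 1 < v)
    (Z : Fin f → Finset (Fin v)) (hZ : ∀ j, Z j ≠ Finset.univ)
    (𝒮 : Set (Matrix (Fin v) (Fin f) ℝ))
    (h𝒮 : 𝒮 = {S | S.rank = d + 1 ∧ ∀ i j, S i j = 0 ↔ i ∈ Z j})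
    (S : Matrix (Fin v) (Fin f) ℝ) (hS : S ∈ 𝒮)
    (hfacet : ∀ j, Module.finrank ℝ
      ↥(Submodule.span ℝ ((fun i => S i) '' (Z j : Set (Fin v)))) = d) :
    ∀ S' ∈ 𝒮, (colSpace S = colSpace S' ↔
      ∃ lam : Fin f → ℝ, (∀ j, lam j ≠ 0) ∧ ∀ i j, S' i j = lam j * S i j) :=
  stmt3_general d v f Z hZ 𝒮 h𝒮 S hS hfacet
end

section
/- Fix integers d ≥ 1 and v, f with d+1 < v. Let Z be a zero pattern assigning to each column index j ∈ {1,…,f} a proper subset Z(j) ⊊ {1,…,v}, and let 𝒮 be the set of real v×f matrices S of rank d+1 such that S_{ij} = 0 if and only if i ∈ Z(j). Let S, S′ ∈ 𝒮, where S satisfies the facet-rank condition (for every j the rows of S indexed by Z(j) span a d-dimensional subspace), and let B be a Gale transform of S and B′ a Gale transform of S′. Then the following are equivalent: (i) there exist an invertible diagonal v×v matrix D_r and nonzero reals λ_1,…,λ_f such that S′ = D_r·S·diag(λ_1,…,λ_f); (ii) there exist an invertible diagonal v×v matrix D and A ∈ GL_{v−d−1}(ℝ) such that B′ = D·B·A (equivalently,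 each row b′_i of B′ equals a nonzero scalar multiple of A ᵀ applied to the corresponding row b_i of B). -/
/-!
If `S' = diag(r) S diag(c)`, then `B` and `diag(r) B'` are both Gale transforms of `S`; any two
Gale transforms of `S` have the same column space `ker Sᵀ` and full column rank, so they differ by
an invertible matrix on the right.

Conversely, if `B' = diag(D) B A`, the columns of `diag(D) S'` lie in `ker Bᵀ`, which is the
column space of `S`. By the facet-rank condition, the vectors of this `(d + 1)`-dimensional space
vanishing on `Z(j)` form a line, spanned by the `j`-th column of `S`; the `j`-th column of
`diag(D) S'` has the same zero set, hence is a nonzero multiple of it.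
-/

open Matrix Module

theorem Submodule.finrank_map_add_finrank_inf_ker {K V W : Type*} [Field K] [AddCommGroup V]
    [Module K V] [AddCommGroup W] [Module K W] [FiniteDimensional K V]
    (U : Submodule K V) (f : V →ₗ[K] W) :
    finrank K (U.map f) + finrank K ↥(U ⊓ LinearMap.ker f) = finrank K U := by
  rw [← LinearMap.range_domRestrict, ← (f.domRestrict U).finrank_range_add_finrank_ker,
    LinearMap.ker_domRestrict, ← Submodule.finrank_map_subtype_eq, Submodule.map_comap_subtype]

namespace Matrix

variable {K : Type*} [Field K] {l m n k : Type*} [Fintype m] [Fintype n] [Fintype k]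

theorem isUnit_det_of_rank_eq_card [DecidableEq n] {A : Matrix n n K}
    (h : A.rank = Fintype.card n) : IsUnit A.det := by
  have hrange : LinearMap.range A.mulVecLin = ⊤ :=
    Submodule.eq_top_of_finrank_eq (by rw [finrank_fintype_fun_eq_card]; exact h)
  rw [← isUnit_iff_isUnit_det, ← mulVec_surjective_iff_isUnit]
  exact LinearMap.range_eq_top.mp hrange

theorem range_mulVecLin_le_ker_of_mul_eq_zero {N : Matrix l m K} {M : Matrix m n K}
    (h : N * M = 0) : LinearMap.range M.mulVecLin ≤ LinearMap.ker N.mulVecLin := by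
  rw [LinearMap.range_le_ker_iff, ← mulVecLin_mul, h, mulVecLin_zero]

theorem range_mulVecLin_eq_ker_of_mul_eq_zero {N : Matrix l m K} {M : Matrix m n K}
    (h : N * M = 0) (hrank : N.rank + M.rank = Fintype.card m) :
    LinearMap.range M.mulVecLin = LinearMap.ker N.mulVecLin := by
  refine Submodule.eq_of_le_of_finrank_eq (range_mulVecLin_le_ker_of_mul_eq_zero h) ?_
  have := N.mulVecLin.finrank_range_add_finrank_ker
  rw [finrank_fintype_fun_eq_card] at this
  rw [rank] at hrank
  change M.rank = _
  omega

theorem exists_mul_eq_of_range_mulVecLin_le {R : Type*} [CommRing R] [DecidableEq n]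
    {B : Matrix l k R} {C : Matrix l n R}
    (h : LinearMap.range C.mulVecLin ≤ LinearMap.range B.mulVecLin) :
    ∃ A : Matrix k n R, B * A = C := by
  choose a ha using fun j => h ⟨Pi.single j 1, rfl⟩
  refine ⟨(of a)ᵀ, ?_⟩
  ext i j
  have := congrFun (ha j) i
  simp only [mulVecLin_apply, mulVec_single_one] at this
  simpa [mul_apply, mulVec, dotProduct] using this

theorem exists_isUnit_det_mul_eq_of_range_mulVecLin_eq [DecidableEq k] {B C : Matrix l k K}
    (h : LinearMap.range B.mulVecLin = LinearMap.range C.mulVecLin)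
    (hC : C.rank = Fintype.card k) : ∃ A : Matrix k k K, IsUnit A.det ∧ B * A = C := by
  obtain ⟨A, hA⟩ := exists_mul_eq_of_range_mulVecLin_le h.ge
  refine ⟨A, isUnit_det_of_rank_eq_card (le_antisymm (rank_le_card_width A) ?_), hA⟩
  calc Fintype.card k = C.rank := hC.symm
    _ ≤ A.rank := hA ▸ rank_mul_le_right B A

/-- `ker (funLeft (↑))` is the subspace of vectors vanishing on `Z`. -/
theorem finrank_range_inf_ker_funLeft_add_finrank_span_row (S : Matrix m n K) (Z : Set m) :
    finrank K ↥(LinearMap.range S.mulVecLin ⊓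
        LinearMap.ker (LinearMap.funLeft K K ((↑) : Z → m))) +
      finrank K (Submodule.span K (S.row '' Z)) = S.rank := by
  classical
  have hZ :
      finrank K (Submodule.span K (S.row '' Z)) = (S.submatrix ((↑) : Z → m) id).rank := by
    rw [rank_eq_finrank_span_row, Set.image_eq_range]
    rfl
  have hmap : (LinearMap.range S.mulVecLin).map (LinearMap.funLeft K K ((↑) : Z → m)) =
      LinearMap.range (S.submatrix ((↑) : Z → m) id).mulVecLin := by
    rw [← LinearMap.range_comp]
    rfl
  rw [hZ, rank, ← hmap, add_comm, Submodule.finrank_map_add_finrank_inf_ker, rank]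

theorem exists_ne_zero_smul_eq_of_forall_eq_zero_iff {S : Matrix m n K} {Z : Set m}
    (hfacet : finrank K (Submodule.span K (S.row '' Z)) + 1 = S.rank) {s t : m → K}
    (hs : s ∈ LinearMap.range S.mulVecLin) (ht : t ∈ LinearMap.range S.mulVecLin)
    (hsZ : ∀ i, s i = 0 ↔ i ∈ Z) (htZ : ∀ i, t i = 0 ↔ i ∈ Z) :
    ∃ c : K, c ≠ 0 ∧ t = c • s := by
  obtain ⟨i₀, hi₀⟩ : ∃ i, i ∉ Z := by
    by_contra! h
    rw [Set.eq_univ_of_forall h, Set.image_univ, ← rank_eq_finrank_span_row] at hfacet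
    exact Nat.succ_ne_self _ hfacet
  have hW := finrank_range_inf_ker_funLeft_add_finrank_span_row S Z
  set W := LinearMap.range S.mulVecLin ⊓ LinearMap.ker (LinearMap.funLeft K K ((↑) : Z → m))
  replace hW : finrank K W = 1 := by omega
  have mem_W {u : m → K} (hu : u ∈ LinearMap.range S.mulVecLin)
      (huZ : ∀ i, u i = 0 ↔ i ∈ Z) : u ∈ W :=
    ⟨hu, funext fun i => (huZ i).mpr i.2⟩
  have hs₀ : s i₀ ≠ 0 := (hsZ i₀).not.mpr hi₀
  obtain ⟨c, hc⟩ := (finrank_eq_one_iff_of_nonzero' (⟨s, mem_W hs hsZ⟩ : W)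
    (fun h => hs₀ (congrFun (congrArg Subtype.val h) i₀))).mp hW ⟨t, mem_W ht htZ⟩
  have hct : c • s = t := congrArg Subtype.val hc
  refine ⟨c, fun hc₀ => hi₀ ((htZ i₀).mp ?_), hct.symm⟩
  rw [← hct, hc₀, zero_smul, Pi.zero_apply]

theorem exists_eq_mul_diagonal_of_range_mulVecLin_le [DecidableEq n] {S T : Matrix m n K}
    {Z : n → Set m} (hfacet : ∀ j, finrank K (Submodule.span K (S.row '' Z j)) + 1 = S.rank)
    (hSZ : ∀ i j, S i j = 0 ↔ i ∈ Z j) (hTZ : ∀ i j, T i j = 0 ↔ i ∈ Z j)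
    (hTS : LinearMap.range T.mulVecLin ≤ LinearMap.range S.mulVecLin) :
    ∃ c : n → K, (∀ j, c j ≠ 0) ∧ T = S * diagonal c := by
  have col_mem (M : Matrix m n K) (j : n) : M.col j ∈ LinearMap.range M.mulVecLin :=
    ⟨Pi.single j 1, mulVec_single_one M j⟩
  choose c hc₀ hc using fun j => exists_ne_zero_smul_eq_of_forall_eq_zero_iff (hfacet j)
    (col_mem S j) (hTS (col_mem T j)) (hSZ · j) (hTZ · j)
  refine ⟨c, hc₀, ?_⟩
  ext i j
  rw [mul_diagonal, mul_comm]
  exact congrFun (hc j) i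

theorem exists_isUnit_det_mul_eq_of_transpose_mul_eq_zero [DecidableEq k] {S : Matrix m n K}
    {B C : Matrix m k K} (hS : S.rank + Fintype.card k = Fintype.card m)
    (hB : B.rank = Fintype.card k) (hC : C.rank = Fintype.card k)
    (hBS : Bᵀ * S = 0) (hCS : Cᵀ * S = 0) :
    ∃ A : Matrix k k K, IsUnit A.det ∧ B * A = C := by
  have range_eq {M : Matrix m k K} (hM : M.rank = Fintype.card k) (hMS : Mᵀ * S = 0) :
      LinearMap.range M.mulVecLin = LinearMap.ker Sᵀ.mulVecLin :=
    range_mulVecLin_eq_ker_of_mul_eq_zero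
      (by rw [← transpose_transpose M, ← transpose_mul, hMS, transpose_zero])
      (by rw [rank_transpose, hM, hS])
  exact exists_isUnit_det_mul_eq_of_range_mulVecLin_eq
    ((range_eq hB hBS).trans (range_eq hC hCS).symm) hC

theorem isUnit_det_diagonal_of_ne_zero [DecidableEq m] {r : m → K} (hr : ∀ i, r i ≠ 0) :
    IsUnit (diagonal r).det := by
  rw [det_diagonal, isUnit_iff_ne_zero, Finset.prod_ne_zero_iff]
  exact fun i _ => hr i

theorem diagonal_inv_mul_diagonal_mul [DecidableEq m] {r : m → K} (hr : ∀ i, r i ≠ 0)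
    (M : Matrix m l K) : diagonal r⁻¹ * (diagonal r * M) = M := by
  ext i j
  simp [diagonal_mul, inv_mul_cancel_left₀ (hr i)]

theorem exists_eq_diagonal_mul_mul_of_eq_diagonal_mul_mul_diagonal [DecidableEq m]
    [DecidableEq n] [DecidableEq k] {S S' : Matrix m n K} {B B' : Matrix m k K}
    (hS : S.rank + Fintype.card k = Fintype.card m) (hB : B.rank = Fintype.card k)
    (hBS : Bᵀ * S = 0) (hB' : B'.rank = Fintype.card k) (hB'S' : B'ᵀ * S' = 0)
    {r : m → K} (hr : ∀ i, r i ≠ 0) {c : n → K} (hc : ∀ j, c j ≠ 0)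
    (hS' : S' = diagonal r * S * diagonal c) :
    ∃ D : m → K, (∀ i, D i ≠ 0) ∧
      ∃ A : Matrix k k K, IsUnit A.det ∧ B' = diagonal D * B * A := by
  have hCS : (diagonal r * B')ᵀ * S = 0 := calc
    (diagonal r * B')ᵀ * S = B'ᵀ * diagonal r * S * diagonal c * (diagonal c)⁻¹ := by
      rw [mul_nonsing_inv_cancel_right _ _ (isUnit_det_diagonal_of_ne_zero hc), transpose_mul,
        diagonal_transpose]
    _ = 0 := by
      rw [← Matrix.zero_mul (diagonal c)⁻¹, ← hB'S', hS']
      simp only [Matrix.mul_assoc]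
  obtain ⟨A, hA, hBA⟩ := exists_isUnit_det_mul_eq_of_transpose_mul_eq_zero hS hB
    (by rw [rank_mul_eq_right_of_isUnit_det _ _ (isUnit_det_diagonal_of_ne_zero hr), hB']) hBS hCS
  refine ⟨r⁻¹, fun i => inv_ne_zero (hr i), A, hA, ?_⟩
  rw [Matrix.mul_assoc, hBA, diagonal_inv_mul_diagonal_mul hr]

theorem exists_eq_diagonal_mul_mul_diagonal_of_eq_diagonal_mul_mul [DecidableEq m]
    [DecidableEq n] [DecidableEq k] {S S' : Matrix m n K} {B B' : Matrix m k K} {Z : n → Set m}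
    (hS : S.rank + Fintype.card k = Fintype.card m) (hB : B.rank = Fintype.card k)
    (hBS : Bᵀ * S = 0) (hB'S' : B'ᵀ * S' = 0)
    (hfacet : ∀ j, finrank K (Submodule.span K (S.row '' Z j)) + 1 = S.rank)
    (hSZ : ∀ i j, S i j = 0 ↔ i ∈ Z j) (hS'Z : ∀ i j, S' i j = 0 ↔ i ∈ Z j)
    {D : m → K} (hD : ∀ i, D i ≠ 0) {A : Matrix k k K} (hA : IsUnit A.det)
    (hB' : B' = diagonal D * B * A) :
    ∃ r : m → K, (∀ i, r i ≠ 0) ∧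
      ∃ c : n → K, (∀ j, c j ≠ 0) ∧ S' = diagonal r * S * diagonal c := by
  have hBT : Bᵀ * (diagonal D * S') = 0 := calc
    Bᵀ * (diagonal D * S') = Aᵀ⁻¹ * (Aᵀ * (Bᵀ * (diagonal D * S'))) :=
      (nonsing_inv_mul_cancel_left _ _ (isUnit_det_transpose _ hA)).symm
    _ = 0 := by
      rw [← Matrix.mul_zero Aᵀ⁻¹, ← hB'S', hB']
      simp only [transpose_mul, diagonal_transpose, Matrix.mul_assoc]
  have hrange : LinearMap.range S.mulVecLin = LinearMap.ker Bᵀ.mulVecLin :=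
    range_mulVecLin_eq_ker_of_mul_eq_zero hBS (by rw [rank_transpose, hB, add_comm, hS])
  obtain ⟨c, hc, hDS'⟩ := exists_eq_mul_diagonal_of_range_mulVecLin_le hfacet hSZ
    (fun i j => by rw [diagonal_mul, mul_eq_zero, or_iff_right (hD i), hS'Z])
    (hrange ▸ range_mulVecLin_le_ker_of_mul_eq_zero hBT)
  refine ⟨D⁻¹, fun i => inv_ne_zero (hD i), c, hc, ?_⟩
  rw [Matrix.mul_assoc, ← hDS', diagonal_inv_mul_diagonal_mul hD]

end Matrix

theorem stmt7_general (d v f : ℕ) (hv : d + 1 < v)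
    (Z : Fin f → Finset (Fin v))
    (𝒮 : Set (Matrix (Fin v) (Fin f) ℝ))
    (h𝒮 : 𝒮 = {S | S.rank = d + 1 ∧ ∀ i j, S i j = 0 ↔ i ∈ Z j})
    (S S' : Matrix (Fin v) (Fin f) ℝ) (hS : S ∈ 𝒮) (hS' : S' ∈ 𝒮)
    (hfacet : ∀ j, Module.finrank ℝ
      ↥(Submodule.span ℝ ((fun i => S i) '' (Z j : Set (Fin v)))) = d)
    (B B' : Matrix (Fin v) (Fin (v - (d + 1))) ℝ)
    (hB : B.rank = v - (d + 1)) (hBS : Bᵀ * S = 0)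
    (hB' : B'.rank = v - (d + 1)) (hB'S' : B'ᵀ * S' = 0) :
    (∃ dr : Fin v → ℝ, (∀ i, dr i ≠ 0) ∧
        ∃ lam : Fin f → ℝ, (∀ j, lam j ≠ 0) ∧
          S' = Matrix.diagonal dr * S * Matrix.diagonal lam) ↔
      ∃ D : Fin v → ℝ, (∀ i, D i ≠ 0) ∧
        ∃ A : Matrix (Fin (v - (d + 1))) (Fin (v - (d + 1))) ℝ, IsUnit A.det ∧
          B' = Matrix.diagonal D * B * A := by
  subst h𝒮
  obtain ⟨hS_rank, hSZ⟩ := hS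
  obtain ⟨-, hS'Z⟩ := hS'
  have hcard : S.rank + Fintype.card (Fin (v - (d + 1))) = Fintype.card (Fin v) := by
    simp only [hS_rank, Fintype.card_fin]
    omega
  replace hB : B.rank = Fintype.card (Fin (v - (d + 1))) := by rw [hB, Fintype.card_fin]
  replace hB' : B'.rank = Fintype.card (Fin (v - (d + 1))) := by rw [hB', Fintype.card_fin]
  replace hfacet (j) : finrank ℝ (Submodule.span ℝ (S.row '' Z j)) + 1 = S.rank := by
    rw [hS_rank, ← hfacet j]
    rfl
  constructor
  · rintro ⟨r, hr, c, hc, hS'⟩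
    exact exists_eq_diagonal_mul_mul_of_eq_diagonal_mul_mul_diagonal hcard hB hBS hB' hB'S' hr hc
      hS'
  · rintro ⟨D, hD, A, hA, hB'_eq⟩
    exact exists_eq_diagonal_mul_mul_diagonal_of_eq_diagonal_mul_mul (Z := fun j => Z j) hcard hB
      hBS hB'S' hfacet hSZ hS'Z hD hA hB'_eq

/-- Remark (end of the Gale section): two elements of the slack variety differ by row and
column scaling iff their Gale transforms are related by a linear transformation together
with a nonzero scaling of the Gale vectors. -/
theorem stmt7 (d v f : ℕ) (hd : 1 ≤ d) (hv : d + 1 < v)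
    (Z : Fin f → Finset (Fin v)) (hZ : ∀ j, Z j ≠ Finset.univ)
    (𝒮 : Set (Matrix (Fin v) (Fin f) ℝ))
    (h𝒮 : 𝒮 = {S | S.rank = d + 1 ∧ ∀ i j, S i j = 0 ↔ i ∈ Z j})
    (S S' : Matrix (Fin v) (Fin f) ℝ) (hS : S ∈ 𝒮) (hS' : S' ∈ 𝒮)
    (hfacet : ∀ j, Module.finrank ℝ
      ↥(Submodule.span ℝ ((fun i => S i) '' (Z j : Set (Fin v)))) = d)
    (B B' : Matrix (Fin v) (Fin (v - (d + 1))) ℝ)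
    (hB : B.rank = v - (d + 1)) (hBS : Bᵀ * S = 0)
    (hB' : B'.rank = v - (d + 1)) (hB'S' : B'ᵀ * S' = 0) :
    (∃ dr : Fin v → ℝ, (∀ i, dr i ≠ 0) ∧
        ∃ lam : Fin f → ℝ, (∀ j, lam j ≠ 0) ∧
          S' = Matrix.diagonal dr * S * Matrix.diagonal lam) ↔
      ∃ D : Fin v → ℝ, (∀ i, D i ≠ 0) ∧
        ∃ A : Matrix (Fin (v - (d + 1))) (Fin (v - (d + 1))) ℝ, IsUnit A.det ∧
          B' = Matrix.diagonal D * B * A :=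
  stmt7_general d v f hv Z 𝒮 h𝒮 S S' hS hS' hfacet B B' hB hBS hB' hB'S'
end

section
/- Fix integers d ≥ 1 and v, f with d+1 < v. Let Z be a zero pattern assigning to each column index j ∈ {1,…,f} a proper subset Z(j) ⊊ {1,…,v}, and let 𝒮 be the set of real v×f matrices S of rank d+1 such that S_{ij} = 0 if and only if i ∈ Z(j). Let F ⊆ {1,…,f} be a set of column indices and let S ∈ 𝒮 be such that (a) the columns of S indexed by F span the column space of S, and (b) for every j ∉ F the rows of S indexed by Z(j) span a d-dimensional subspace. If S′ ∈ 𝒮 and there exist nonzero reals (μ_j)_{j∈F} such that for every j ∈ F the j-th column of S′ equals μ_j times the j-th column of S, then there exist nonzero reals λ_1,…,λ_f with λ_j = μ_j for j ∈ F and S′ = S·diag(λ_1,…,λ_f). In other words, a matrix in 𝒮 is determined, up to scaling of the columns outside F, by its submatrix of columns F. -/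
open Matrix

/-!
The columns indexed by `F` of `S` are scalar multiples of those of `S'`, so they lie in the
column space of `S'`; as they span the column space of `S` and both matrices have rank `d + 1`,
the two column spaces coincide. For `j ∉ F`, the vectors of this common column space vanishing
on the rows `Z j` form the kernel of the restriction to those rows, whose image is spanned by
the rows of `S` indexed by `Z j`; by rank–nullity that kernel is a line. The `j`-th columns of
`S` and `S'` both lie on it and are nonzero (some row lies outside `Z j`), so they are
proportional with a nonzero factor.
-/

open Module Submodule LinearMap

section

variable {K m n : Type*} [Field K] [Fintype n]

theorem Matrix.transpose_apply_mem_range_mulVecLin [DecidableEq n] (A : Matrix m n K) (j : n) :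
    Aᵀ j ∈ range A.mulVecLin :=
  ⟨Pi.single j 1, by ext i; simp⟩

theorem Matrix.range_mulVecLin_eq_of_span_cols [DecidableEq n] {A B : Matrix m n K} {F : Set n}
    (hspan : span K (Aᵀ '' F) = range A.mulVecLin)
    (hcol : ∀ j ∈ F, Aᵀ j ∈ range B.mulVecLin) (hrank : A.rank = B.rank) :
    range A.mulVecLin = range B.mulVecLin :=
  Submodule.eq_of_le_of_finrank_eq (hspan ▸ span_le.mpr (Set.image_subset_iff.mpr hcol)) hrank

theorem Matrix.finrank_range_mulVecLin_inf_ker_add_finrank_span_rows [Finite m]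
    (A : Matrix m n K) (s : Set m) :
    finrank K ↥(range A.mulVecLin ⊓ ker (funLeft K K (Subtype.val : s → m))) +
      finrank K (span K ((fun i => A i) '' s)) = A.rank := by
  set L := funLeft K K (Subtype.val : s → m) ∘ₗ (range A.mulVecLin).subtype
  have hker : finrank K (ker L) =
      finrank K ↥(range A.mulVecLin ⊓ ker (funLeft K K (Subtype.val : s → m))) := by
    rw [LinearMap.ker_comp, ← map_comap_subtype, finrank_map_subtype_eq]
  have hrange : finrank K (range L) = finrank K (span K ((fun i => A i) '' s)) := by
    have : range L = range (A.submatrix Subtype.val _root_.id).mulVecLin := by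
      rw [LinearMap.range_comp, range_subtype, ← LinearMap.range_comp]
      rfl
    rw [this, ← Matrix.rank, rank_eq_finrank_span_row, Set.image_eq_range]
    rfl
  rw [← hker, ← hrange, add_comm]
  exact L.finrank_range_add_finrank_ker

theorem Matrix.exists_col_eq_smul_of_rows_vanishing [DecidableEq n] [Finite m]
    {A B : Matrix m n K} (hAB : range A.mulVecLin = range B.mulVecLin)
    {s : Set m} (hs : finrank K (span K ((fun i => A i) '' s)) + 1 = A.rank) {j : n}
    (hA : ∀ i ∈ s, A i j = 0) (hB : ∀ i ∈ s, B i j = 0) (hAj : Aᵀ j ≠ 0) :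
    ∃ c : K, Bᵀ j = c • Aᵀ j := by
  set W := range A.mulVecLin ⊓ ker (funLeft K K (Subtype.val : s → m))
  have hW : finrank K W = 1 := by
    have hsum := A.finrank_range_mulVecLin_inf_ker_add_finrank_span_rows s
    exact Nat.add_right_cancel (hsum.trans (hs.symm.trans (add_comm _ _)))
  have hAW : Aᵀ j ∈ W :=
    ⟨A.transpose_apply_mem_range_mulVecLin j, funext fun i => hA i i.2⟩
  have hBW : Bᵀ j ∈ W :=
    ⟨hAB ▸ B.transpose_apply_mem_range_mulVecLin j, funext fun i => hB i i.2⟩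
  obtain ⟨c, hc⟩ := (finrank_eq_one_iff_of_nonzero' (⟨Aᵀ j, hAW⟩ : W)
    (by simpa using hAj)).mp hW ⟨Bᵀ j, hBW⟩
  exact ⟨c, congrArg Subtype.val hc.symm⟩

end

theorem stmt8_general (d v f : ℕ)
    (Z : Fin f → Finset (Fin v)) (hZ : ∀ j, Z j ≠ Finset.univ)
    (𝒮 : Set (Matrix (Fin v) (Fin f) ℝ))
    (h𝒮 : 𝒮 = {S | S.rank = d + 1 ∧ ∀ i j, S i j = 0 ↔ i ∈ Z j})
    (F : Finset (Fin f))
    (S : Matrix (Fin v) (Fin f) ℝ) (hS : S ∈ 𝒮)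
    (hspan : Submodule.span ℝ ((fun j => Sᵀ j) '' (F : Set (Fin f))) = colSpace S)
    (hfacet : ∀ j ∉ F, Module.finrank ℝ
      ↥(Submodule.span ℝ ((fun i => S i) '' (Z j : Set (Fin v)))) = d) :
    ∀ S' ∈ 𝒮, ∀ μ : Fin f → ℝ, (∀ j ∈ F, μ j ≠ 0) →
      (∀ j ∈ F, ∀ i, S' i j = μ j * S i j) →
      ∃ lam : Fin f → ℝ, (∀ j, lam j ≠ 0) ∧ (∀ j ∈ F, lam j = μ j) ∧
        S' = S * Matrix.diagonal lam := by
  intro S' hS' μ hμ hcolF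
  rw [h𝒮] at hS hS'
  obtain ⟨hrank, hpat⟩ := hS
  obtain ⟨hrank', hpat'⟩ := hS'
  have hcolSpace : colSpace S = colSpace S' := by
    refine range_mulVecLin_eq_of_span_cols hspan (fun j hj => ?_) (hrank.trans hrank'.symm)
    have : Sᵀ j = (μ j)⁻¹ • S'ᵀ j := by
      ext i
      simp [hcolF j hj i, hμ j hj]
    exact this ▸ smul_mem _ _ (S'.transpose_apply_mem_range_mulVecLin j)
  have hcol : ∀ j, ∃ c : ℝ, c ≠ 0 ∧ (j ∈ F → c = μ j) ∧
      ∀ i, S' i j = c * S i j := by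
    intro j
    by_cases hj : j ∈ F
    · exact ⟨μ j, hμ j hj, fun _ => rfl, hcolF j hj⟩
    obtain ⟨i₀, hi₀⟩ : ∃ i₀, i₀ ∉ Z j := by
      simpa [Finset.eq_univ_iff_forall] using hZ j
    obtain ⟨c, hc⟩ := exists_col_eq_smul_of_rows_vanishing hcolSpace
      (s := Z j) (by rw [hfacet j hj, hrank]) (fun i hi => (hpat i j).mpr hi)
      (fun i hi => (hpat' i j).mpr hi) (fun h => hi₀ ((hpat i₀ j).mp (congrFun h i₀)))
    have hc' : ∀ i, S' i j = c * S i j := fun i => congrFun hc i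
    refine ⟨c, fun hc0 => hi₀ ((hpat' i₀ j).mp ?_), fun h => absurd h hj, hc'⟩
    rw [hc' i₀, hc0, zero_mul]
  choose lam hlam0 hlamF hlam using hcol
  refine ⟨lam, hlam0, hlamF, ?_⟩
  ext i j
  rw [mul_diagonal, hlam, mul_comm]

/-- Lemma (slackProjequivalence, pointwise): an element of the slack variety is determined,
up to scaling the columns outside `F`, by its submatrix of columns `F`, provided the columns
of `F` span the column space and every column outside `F` satisfies the facet-rank condition. -/
theorem stmt8 (d v f : ℕ) (hd : 1 ≤ d) (hv : d + 1 < v)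
    (Z : Fin f → Finset (Fin v)) (hZ : ∀ j, Z j ≠ Finset.univ)
    (𝒮 : Set (Matrix (Fin v) (Fin f) ℝ))
    (h𝒮 : 𝒮 = {S | S.rank = d + 1 ∧ ∀ i j, S i j = 0 ↔ i ∈ Z j})
    (F : Finset (Fin f))
    (S : Matrix (Fin v) (Fin f) ℝ) (hS : S ∈ 𝒮)
    (hspan : Submodule.span ℝ ((fun j => Sᵀ j) '' (F : Set (Fin f))) = colSpace S)
    (hfacet : ∀ j ∉ F, Module.finrank ℝ
      ↥(Submodule.span ℝ ((fun i => S i) '' (Z j : Set (Fin v)))) = d) :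
    ∀ S' ∈ 𝒮, ∀ μ : Fin f → ℝ, (∀ j ∈ F, μ j ≠ 0) →
      (∀ j ∈ F, ∀ i, S' i j = μ j * S i j) →
      ∃ lam : Fin f → ℝ, (∀ j, lam j ≠ 0) ∧ (∀ j ∈ F, lam j = μ j) ∧
        S' = S * Matrix.diagonal lam :=
  stmt8_general d v f Z hZ 𝒮 h𝒮 F S hS hspan hfacet
end

section
/- There is no real 8×10 matrix S of rank 5 whose rows are indexed by the vertices 1,…,8 and whose columns are indexed by the 10 facets {1,2,3,4,5}, {1,2,3,4,6}, {1,2,5,7,8}, {1,2,6,7,8}, {1,4,5,6,8}, {3,4,5,7,8}, {2,3,5,7}, {2,3,6,7}, {3,4,6,7}, {4,6,7,8} of the first nonpolytopal 3-sphere of Altshuler and Steinberg, such that S_{ij} = 0 if vertex i belongs to facet j and S_{ij} ≠ 0 if vertex i does not belong to facet j. In particular, this 3-sphere is not realizable as the boundary of a 4-polytope. -/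
/-!
A realization has rank 5, so every 6 × 6 minor of its slack matrix vanishes. Expanding two
such minors along their many zero entries, the first one is a product of nonzero entries
times the 2 × 2 minor `S₂₂ S₃₃ - S₂₃ S₃₂` (0-based indices), which must therefore vanish;
modulo that 2 × 2 minor, the second one is a product of nonzero entries, a contradiction.
In the language of the slack ideal: these two minors already saturate to the unit ideal.
-/

open Matrix

/-- The 10 facets (as vertex sets, with the paper's vertices `1,…,8` written as
`0,…,7 : Fin 8`) of the first nonpolytopal 3-sphere of Altshuler and Steinberg:
`12345, 12346, 12578, 12678, 14568, 34578, 2357, 2367, 3467, 4678`. -/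
def sphereFacets : List (Finset (Fin 8)) := [
    {0, 1, 2, 3, 4},
    {0, 1, 2, 3, 5},
    {0, 1, 4, 6, 7},
    {0, 1, 5, 6, 7},
    {0, 3, 4, 5, 7},
    {2, 3, 4, 6, 7},
    {1, 2, 4, 6},
    {1, 2, 5, 6},
    {2, 3, 5, 6},
    {3, 5, 6, 7}
  ]

/-- The facet indexed by `j : Fin 10`. -/
def sphereFacet (j : Fin 10) : Finset (Fin 8) :=
  sphereFacets.get (Fin.cast (by rfl) j)

theorem Matrix.det_submatrix_eq_zero_of_rank_lt {m n ι K : Type*} [Fintype n] [Fintype ι]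
    [DecidableEq ι] [Field K] (A : Matrix m n K) (r : ι → m) (c : ι → n)
    (h : A.rank < Fintype.card ι) : (A.submatrix r c).det = 0 := by
  by_contra hdet
  have hunit : IsUnit (A.submatrix r c) := (isUnit_iff_isUnit_det _).2 (Ne.isUnit hdet)
  have := (A.submatrix r c).rank_of_isUnit hunit ▸ A.rank_submatrix_le r c
  omega

section SphereMinors

variable {R : Type*} [CommRing R] {S : Matrix (Fin 8) (Fin 10) R}

theorem det_submatrix_sphere_first (hS : ∀ i j, i ∈ sphereFacet j → S i j = 0) :
    (S.submatrix ![0, 1, 2, 3, 4, 5] ![0, 1, 2, 3, 4, 5]).det =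
      S 0 5 * S 1 4 * S 4 1 * S 5 0 * (S 2 2 * S 3 3 - S 2 3 * S 3 2) := by
  simp (disch := decide) only [det_succ_row_zero, Fin.sum_univ_succ, Fin.sum_univ_zero,
    det_fin_zero, submatrix_apply, Fin.succ_succAbove_zero, Fin.succ_succAbove_succ,
    Fin.zero_succAbove, cons_val_zero, cons_val_succ, Fin.val_succ, Fin.val_zero, hS, mul_zero,
    zero_mul, add_zero, zero_add]
  ring

theorem det_submatrix_sphere_second (hS : ∀ i j, i ∈ sphereFacet j → S i j = 0) :
    (S.submatrix ![0, 2, 3, 4, 6, 7] ![0, 2, 3, 4, 5, 8]).det =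
      -S 0 5 * (S 2 4 * S 3 2 * S 4 3 * S 6 0 * S 7 8 +
        S 4 8 * S 6 4 * S 7 0 * (S 2 2 * S 3 3 - S 2 3 * S 3 2)) := by
  simp (disch := decide) only [det_succ_row_zero, Fin.sum_univ_succ, Fin.sum_univ_zero,
    det_fin_zero, submatrix_apply, Fin.succ_succAbove_zero, Fin.succ_succAbove_succ,
    Fin.zero_succAbove, cons_val_zero, cons_val_succ, Fin.val_succ, Fin.val_zero, hS, mul_zero,
    zero_mul, add_zero, zero_add]
  ring

end SphereMinors

/-- The first nonpolytopal 3-sphere of Altshuler and Steinberg has no (generalized) slack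
matrix: there is no real `8 × 10` matrix of rank `5` whose `(i,j)` entry is zero when vertex
`i` lies on facet `j` and nonzero otherwise. In particular, this 3-sphere is not realizable
as the boundary of a 4-polytope. -/
theorem stmt10 :
    ¬ ∃ S : Matrix (Fin 8) (Fin 10) ℝ, S.rank = 5 ∧
      ∀ (i : Fin 8) (j : Fin 10),
        (i ∈ sphereFacet j → S i j = 0) ∧ (i ∉ sphereFacet j → S i j ≠ 0) := by
  rintro ⟨S, hrank, hS⟩
  have hzero i j (h : i ∈ sphereFacet j) : S i j = 0 := (hS i j).1 h
  have hne i j (h : i ∉ sphereFacet j) : S i j ≠ 0 := (hS i j).2 h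
  have hminor (r c : Fin 6 → _) : (S.submatrix r c).det = 0 :=
    S.det_submatrix_eq_zero_of_rank_lt r c (by simp [hrank])
  have h₁ := det_submatrix_sphere_first hzero ▸ hminor ![0, 1, 2, 3, 4, 5] ![0, 1, 2, 3, 4, 5]
  have h₂ := det_submatrix_sphere_second hzero ▸ hminor ![0, 2, 3, 4, 6, 7] ![0, 2, 3, 4, 5, 8]
  have hquad : S 2 2 * S 3 3 - S 2 3 * S 3 2 = 0 := by
    simpa (disch := decide) only [mul_eq_zero, hne, false_or] using h₁
  simp (disch := decide) only [hquad, mul_zero, add_zero, neg_eq_zero, mul_eq_zero, hne,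
    or_self] at h₂
end
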